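/- arXiv:1206.6927 — 4 statements merged into one kernel-verified Lean document; each statement's English description precedes it below -/
import Mathlib

section
/- Let M₀ ∈ ℝ^{K×L} have no two equal rows and no two equal columns, and let f be twice differentiable with f'' bounded away from zero on the convex hull of the entries of M₀. If C ∈ 𝒮_K and D ∈ 𝒮_L satisfy min_a [C1]_a > η and min_b [D1]_b > η, and (C, D) ∉ 𝒫_δ × 𝒬_δ, then G_{M₀}(C, D) − Σ_{a,b} [C1]_a [D1]_b f([M₀]_{ab}) ≤ −κ η² δ, where κ > 0 is a constant depending only on M₀ and f (independent of δ and η). -/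
set_option autoImplicit false

noncomputable section

/-- Population criterion `G_{M₀}(C, D)`. -/
def popG {K L : ℕ} (f : ℝ → ℝ) (M0 : Matrix (Fin K) (Fin L) ℝ)
    (C : Matrix (Fin K) (Fin K) ℝ) (D : Matrix (Fin L) (Fin L) ℝ) : ℝ :=
  ∑ k, ∑ l, (∑ a, C a k) * (∑ b, D b l) *
    f ((∑ a, ∑ b, C a k * M0 a b * D b l) / ((∑ a, C a k) * (∑ b, D b l)))

/-- Membership in `𝒫_δ` (resp. `𝒬_δ`): all products of two distinct entries within a column
are `< δ`. -/
def inP {K : ℕ} (δ : ℝ) (C : Matrix (Fin K) (Fin K) ℝ) : Prop :=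
  ∀ k a a', a ≠ a' → C a k * C a' k < δ

/-- Membership in `𝒮_K`: nonnegative entries summing to one. -/
def inS {K : ℕ} (C : Matrix (Fin K) (Fin K) ℝ) : Prop :=
  (∀ a k, 0 ≤ C a k) ∧ (∑ a, ∑ k, C a k) = 1

lemma tangent_lb (f : ℝ → ℝ) (κf m Mx : ℝ) (hf : ContDiff ℝ 2 f)
    (hf'' : ∀ t ∈ Set.Icc m Mx, κf ≤ deriv (deriv f) t)
    {x y : ℝ} (hx : x ∈ Set.Icc m Mx) (hy : y ∈ Set.Icc m Mx) :
    f x + deriv f x * (y - x) + κf / 2 * (y - x) ^ 2 ≤ f y := by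
  have h2 : (2 : WithTop ℕ∞) = 1 + 1 := by norm_num
  rw [h2, contDiff_succ_iff_deriv] at hf
  obtain ⟨hd1, -, hdf1⟩ := hf
  have hdf : Differentiable ℝ (deriv f) := hdf1.differentiable one_ne_zero
  set g : ℝ → ℝ := fun t => f t - κf / 2 * t ^ 2 with hg
  have hgd : Differentiable ℝ g := hd1.sub (by fun_prop)
  have hg' : ∀ t, deriv g t = deriv f t - κf * t := by
    intro t
    rw [hg]
    rw [deriv_fun_sub (hd1 t) (by fun_prop)]
    simp [deriv_const_mul, mul_comm]
    ring
  have hg'd : Differentiable ℝ (deriv g) := by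
    have : deriv g = fun t => deriv f t - κf * t := funext hg'
    rw [this]; exact hdf.sub (by fun_prop)
  have hg'' : ∀ t ∈ Set.Icc m Mx, 0 ≤ deriv (deriv g) t := by
    intro t ht
    have e2 : deriv (deriv g) t = deriv (deriv f) t - κf := by
      have e : deriv g = fun s => deriv f s - κf * s := funext hg'
      rw [e]
      have h6 := (((hdf t).hasDerivAt).fun_sub (((hasDerivAt_id t).const_mul κf))).deriv
      simpa using h6
    rw [e2]
    linarith [hf'' t ht]
  have hmono : MonotoneOn (deriv g) (Set.Icc m Mx) :=
    monotoneOn_of_deriv_nonneg (convex_Icc m Mx) hg'd.continuous.continuousOn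
      hg'd.differentiableOn (fun t ht => hg'' t (interior_subset ht))
  -- tangent line inequality for g : g x + deriv g x * (y - x) ≤ g y
  have key : deriv g x * (y - x) ≤ g y - g x := by
    rcases le_total x y with hxy | hxy
    · have := (convex_Icc x y).mul_sub_le_image_sub_of_le_deriv
        hgd.continuous.continuousOn hgd.differentiableOn
        (C := deriv g x) (fun t ht => by
          have ht' : t ∈ Set.Icc x y := interior_subset ht
          exact hmono hx (⟨le_trans hx.1 ht'.1, le_trans ht'.2 hy.2⟩) ht'.1)
        x (Set.left_mem_Icc.2 hxy) y (Set.right_mem_Icc.2 hxy) hxy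
      linarith
    · have := (convex_Icc y x).image_sub_le_mul_sub_of_deriv_le
        hgd.continuous.continuousOn hgd.differentiableOn
        (C := deriv g x) (fun t ht => by
          have ht' : t ∈ Set.Icc y x := interior_subset ht
          exact hmono (⟨le_trans hy.1 ht'.1, le_trans ht'.2 hx.2⟩) hx ht'.2)
        y (Set.left_mem_Icc.2 hxy) x (Set.right_mem_Icc.2 hxy) hxy
      linarith
  have hgx : g x = f x - κf / 2 * x ^ 2 := rfl
  have hgy : g y = f y - κf / 2 * y ^ 2 := rfl
  have hg'x : deriv g x = deriv f x - κf * x := hg' x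
  rw [hgx, hgy, hg'x] at key
  nlinarith [key]


lemma jensen_block {A B : Type*} [Fintype A] [Fintype B] (f : ℝ → ℝ) (κf m Mx : ℝ)
    (htan : ∀ x ∈ Set.Icc m Mx, ∀ y ∈ Set.Icc m Mx,
      f x + deriv f x * (y - x) + κf / 2 * (y - x) ^ 2 ≤ f y)
    (u : A → ℝ) (v : B → ℝ) (X : A → B → ℝ)
    (hu : ∀ a, 0 ≤ u a) (hv : ∀ b, 0 ≤ v b)
    (hX : ∀ a b, X a b ∈ Set.Icc m Mx) :
    (∑ a, u a) * (∑ b, v b) *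
        f ((∑ a, ∑ b, u a * X a b * v b) / ((∑ a, u a) * (∑ b, v b)))
      + κf / 2 * ∑ a, ∑ b, u a * v b *
          (X a b - (∑ a, ∑ b, u a * X a b * v b) / ((∑ a, u a) * (∑ b, v b))) ^ 2
      ≤ ∑ a, ∑ b, u a * v b * f (X a b) := by
  set W : ℝ := (∑ a, u a) * (∑ b, v b) with hW
  set S : ℝ := ∑ a, ∑ b, u a * X a b * v b with hS
  set μ : ℝ := S / W with hμ
  rcases eq_or_lt_of_le (mul_nonneg (Finset.sum_nonneg fun a _ => hu a)
      (Finset.sum_nonneg fun b _ => hv b) : (0:ℝ) ≤ W) with hW0 | hWpos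
  · -- W = 0 : either all u = 0 or all v = 0, everything vanishes
    have hz : ∀ a b, u a * v b = 0 := by
      rcases mul_eq_zero.mp (show (∑ a, u a) * (∑ b, v b) = 0 from hW0.symm) with h | h
      · intro a b
        have hu0 : u a = 0 :=
          (Finset.sum_eq_zero_iff_of_nonneg (fun a _ => hu a)).mp h a (Finset.mem_univ a)
        rw [hu0, zero_mul]
      · intro a b
        have hv0 : v b = 0 :=
          (Finset.sum_eq_zero_iff_of_nonneg (fun b _ => hv b)).mp h b (Finset.mem_univ b)
        rw [hv0, mul_zero]
    have e1 : (∑ a, ∑ b, u a * v b * (X a b - μ) ^ 2) = 0 :=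
      Finset.sum_eq_zero fun a _ => Finset.sum_eq_zero fun b _ => by rw [hz a b, zero_mul]
    have e2 : (∑ a, ∑ b, u a * v b * f (X a b)) = 0 :=
      Finset.sum_eq_zero fun a _ => Finset.sum_eq_zero fun b _ => by rw [hz a b, zero_mul]
    have hW0' : W = 0 := hW0.symm
    rw [e1, e2, hW0']
    simp
  · -- W > 0
    have hWne : W ≠ 0 := ne_of_gt hWpos
    have hSl : m * W ≤ S := by
      rw [hS, hW]
      have : ∀ a, (∑ b, u a * m * v b) ≤ ∑ b, u a * X a b * v b := by
        intro a
        refine Finset.sum_le_sum fun b _ => ?_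
        exact mul_le_mul_of_nonneg_right
          (mul_le_mul_of_nonneg_left (hX a b).1 (hu a)) (hv b)
      calc m * ((∑ a, u a) * (∑ b, v b)) = ∑ a, ∑ b, u a * m * v b := by
            rw [Finset.sum_mul]
            rw [Finset.mul_sum]
            refine Finset.sum_congr rfl fun a _ => ?_
            rw [Finset.mul_sum, Finset.mul_sum]
            refine Finset.sum_congr rfl fun b _ => ?_
            ring
        _ ≤ ∑ a, ∑ b, u a * X a b * v b := Finset.sum_le_sum fun a _ => this a
    have hSr : S ≤ Mx * W := by
      rw [hS, hW]
      have : ∀ a, (∑ b, u a * X a b * v b) ≤ ∑ b, u a * Mx * v b := by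
        intro a
        refine Finset.sum_le_sum fun b _ => ?_
        exact mul_le_mul_of_nonneg_right
          (mul_le_mul_of_nonneg_left (hX a b).2 (hu a)) (hv b)
      calc (∑ a, ∑ b, u a * X a b * v b) ≤ ∑ a, ∑ b, u a * Mx * v b :=
            Finset.sum_le_sum fun a _ => this a
        _ = Mx * ((∑ a, u a) * (∑ b, v b)) := by
            rw [Finset.sum_mul, Finset.mul_sum]
            refine Finset.sum_congr rfl fun a _ => ?_
            rw [Finset.mul_sum, Finset.mul_sum]
            refine Finset.sum_congr rfl fun b _ => ?_
            ring
    have hWpos' : (0:ℝ) < W := hWpos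
    have hμmem : μ ∈ Set.Icc m Mx := by
      constructor
      · rw [hμ, le_div_iff₀ hWpos']; exact hSl
      · rw [hμ, div_le_iff₀ hWpos']; exact hSr
    -- pointwise tangent bound
    have hpt : ∀ a b, u a * v b * (f μ + deriv f μ * (X a b - μ) + κf / 2 * (X a b - μ) ^ 2)
        ≤ u a * v b * f (X a b) := fun a b =>
      mul_le_mul_of_nonneg_left (htan μ hμmem (X a b) (hX a b)) (mul_nonneg (hu a) (hv b))
    have hsum : (∑ a, ∑ b, u a * v b *
        (f μ + deriv f μ * (X a b - μ) + κf / 2 * (X a b - μ) ^ 2))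
        ≤ ∑ a, ∑ b, u a * v b * f (X a b) :=
      Finset.sum_le_sum fun a _ => Finset.sum_le_sum fun b _ => hpt a b
    -- expand LHS of hsum
    have hexp : (∑ a, ∑ b, u a * v b *
        (f μ + deriv f μ * (X a b - μ) + κf / 2 * (X a b - μ) ^ 2))
        = W * f μ + deriv f μ * (S - μ * W)
          + κf / 2 * ∑ a, ∑ b, u a * v b * (X a b - μ) ^ 2 := by
      have A1 : (∑ a, u a * ∑ b, v b) = W := by
        rw [hW, Finset.sum_mul]
      have A2 : (∑ a, ∑ b, u a * v b * X a b) = S := by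
        rw [hS]
        exact Finset.sum_congr rfl fun a _ => Finset.sum_congr rfl fun b _ => by ring
      have e1 : (∑ a, ∑ b, u a * v b * f μ) = W * f μ := by
        rw [← A1, Finset.sum_mul]
        refine Finset.sum_congr rfl fun a _ => ?_
        rw [mul_assoc, Finset.sum_mul, Finset.mul_sum]
        exact Finset.sum_congr rfl fun b _ => mul_assoc _ _ _
      have e2 : (∑ a, ∑ b, u a * v b * (deriv f μ * (X a b - μ)))
          = deriv f μ * (S - μ * W) := by
        have step : (∑ a, ∑ b, u a * v b * (deriv f μ * (X a b - μ)))
            = ∑ a, ∑ b, (deriv f μ * (u a * v b * X a b) - deriv f μ * μ * (u a * v b)) :=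
          Finset.sum_congr rfl fun a _ => Finset.sum_congr rfl fun b _ => by ring
        rw [step]
        simp only [Finset.sum_sub_distrib, ← Finset.mul_sum]
        rw [A2, A1]
        ring
      have e3 : (∑ a, ∑ b, u a * v b * (κf / 2 * (X a b - μ) ^ 2))
          = κf / 2 * ∑ a, ∑ b, u a * v b * (X a b - μ) ^ 2 := by
        rw [Finset.mul_sum]
        refine Finset.sum_congr rfl fun a _ => ?_
        rw [Finset.mul_sum]
        exact Finset.sum_congr rfl fun b _ => by ring
      calc (∑ a, ∑ b, u a * v b *
            (f μ + deriv f μ * (X a b - μ) + κf / 2 * (X a b - μ) ^ 2))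
          = (∑ a, ∑ b, u a * v b * f μ)
            + (∑ a, ∑ b, u a * v b * (deriv f μ * (X a b - μ)))
            + (∑ a, ∑ b, u a * v b * (κf / 2 * (X a b - μ) ^ 2)) := by
            simp only [mul_add, Finset.sum_add_distrib]
        _ = W * f μ + deriv f μ * (S - μ * W)
            + κf / 2 * ∑ a, ∑ b, u a * v b * (X a b - μ) ^ 2 := by rw [e1, e2, e3]
    have hμW : S - μ * W = 0 := by
      rw [hμ]; field_simp; ring
    rw [hexp, hμW, mul_zero, add_zero] at hsum
    linarith [hsum]


lemma var_lb {K L : ℕ} (M : Matrix (Fin K) (Fin L) ℝ) (C : Matrix (Fin K) (Fin K) ℝ)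
    (D : Matrix (Fin L) (Fin L) ℝ) (μ : Fin K → Fin L → ℝ) (δ η γ : ℝ)
    (hCpos : ∀ a k, 0 ≤ C a k) (hDpos : ∀ b l, 0 ≤ D b l)
    (hγ : 0 ≤ γ) (hδ0 : 0 ≤ δ) (hη0 : 0 ≤ η)
    (k : Fin K) (a a' : Fin K) (b : Fin L)
    (hCsum : C a k + C a' k ≤ 1)
    (hne : a ≠ a')
    (hδ : δ ≤ C a k * C a' k)
    (hb : γ ≤ (M a b - M a' b) ^ 2)
    (hη : η ≤ ∑ l, D b l) :
    δ * η * γ ≤ ∑ k, ∑ l, ∑ a, ∑ b, C a k * D b l * (M a b - μ k l) ^ 2 := by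
  set F : Fin K → Fin L → Fin K → Fin L → ℝ :=
    fun k l a b => C a k * D b l * (M a b - μ k l) ^ 2 with hF
  have hFpos : ∀ k l a b, 0 ≤ F k l a b := fun k l a b =>
    mul_nonneg (mul_nonneg (hCpos a k) (hDpos b l)) (sq_nonneg _)
  -- per-l two-point bound
  have hpl : ∀ l, δ * γ * D b l ≤ F k l a b + F k l a' b := by
    intro l
    have key : (C a k * C a' k) * ((M a b - M a' b) ^ 2) * D b l
        ≤ F k l a b + F k l a' b := by
      show C a k * C a' k * (M a b - M a' b) ^ 2 * D b l
        ≤ C a k * D b l * (M a b - μ k l) ^ 2 + C a' k * D b l * (M a' b - μ k l) ^ 2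
      have hs : (0:ℝ) ≤ C a k * (M a b - μ k l) ^ 2 + C a' k * (M a' b - μ k l) ^ 2 :=
        add_nonneg (mul_nonneg (hCpos a k) (sq_nonneg _))
          (mul_nonneg (hCpos a' k) (sq_nonneg _))
      have h1 : (0:ℝ) ≤ D b l * ((1 - (C a k + C a' k)) *
          (C a k * (M a b - μ k l) ^ 2 + C a' k * (M a' b - μ k l) ^ 2)) :=
        mul_nonneg (hDpos b l) (mul_nonneg (by linarith) hs)
      have h2 : (0:ℝ) ≤ D b l *
          (C a k * (M a b - μ k l) + C a' k * (M a' b - μ k l)) ^ 2 :=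
        mul_nonneg (hDpos b l) (sq_nonneg _)
      nlinarith [h1, h2]
    refine le_trans ?_ key
    have h1 : δ * γ ≤ (C a k * C a' k) * ((M a b - M a' b) ^ 2) :=
      mul_le_mul hδ hb hγ (le_trans hδ0 hδ)
    exact mul_le_mul_of_nonneg_right h1 (hDpos b l)
  -- sum over l
  have hsl : δ * γ * η ≤ ∑ l, (F k l a b + F k l a' b) := by
    calc δ * γ * η ≤ δ * γ * ∑ l, D b l := by
          exact mul_le_mul_of_nonneg_left hη (mul_nonneg hδ0 hγ)
      _ = ∑ l, δ * γ * D b l := by rw [Finset.mul_sum]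
      _ ≤ ∑ l, (F k l a b + F k l a' b) := Finset.sum_le_sum fun l _ => hpl l
  -- embed into full sums
  have hembed : ∀ l, F k l a b + F k l a' b ≤ ∑ a'', ∑ b'', F k l a'' b'' := by
    intro l
    have h1 : F k l a b ≤ ∑ b'', F k l a b'' :=
      Finset.single_le_sum (fun b'' _ => hFpos k l a b'') (Finset.mem_univ b)
    have h2 : F k l a' b ≤ ∑ b'', F k l a' b'' :=
      Finset.single_le_sum (fun b'' _ => hFpos k l a' b'') (Finset.mem_univ b)
    have h3 : (∑ b'', F k l a b'') + (∑ b'', F k l a' b'')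
        ≤ ∑ a'', ∑ b'', F k l a'' b'' := by
      rw [← Finset.sum_pair (f := fun a'' => ∑ b'', F k l a'' b'') hne]
      exact Finset.sum_le_sum_of_subset_of_nonneg (Finset.subset_univ _)
        (fun a'' _ _ => Finset.sum_nonneg fun b'' _ => hFpos k l a'' b'')
    linarith
  have hk : (∑ l, ∑ a'', ∑ b'', F k l a'' b'')
      ≤ ∑ k', ∑ l, ∑ a'', ∑ b'', F k' l a'' b'' :=
    Finset.single_le_sum (fun k' _ => Finset.sum_nonneg fun l _ =>
      Finset.sum_nonneg fun a'' _ => Finset.sum_nonneg fun b'' _ => hFpos k' l a'' b'')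
      (Finset.mem_univ k)
  calc δ * η * γ = δ * γ * η := by ring
    _ ≤ ∑ l, (F k l a b + F k l a' b) := hsl
    _ ≤ ∑ l, ∑ a'', ∑ b'', F k l a'' b'' := Finset.sum_le_sum fun l _ => hembed l
    _ ≤ ∑ k', ∑ l, ∑ a'', ∑ b'', F k' l a'' b'' := hk

open Set Finset

section aux

lemma sum_pair_le_one {K : ℕ} (C : Matrix (Fin K) (Fin K) ℝ)
    (hpos : ∀ a k, 0 ≤ C a k) (hsum : (∑ a, ∑ k, C a k) = 1)
    (k : Fin K) {a a' : Fin K} (hne : a ≠ a') : C a k + C a' k ≤ 1 := by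
  have h1 : C a k ≤ ∑ k', C a k' :=
    Finset.single_le_sum (fun k' _ => hpos a k') (Finset.mem_univ k)
  have h2 : C a' k ≤ ∑ k', C a' k' :=
    Finset.single_le_sum (fun k' _ => hpos a' k') (Finset.mem_univ k)
  have h3 : (∑ k', C a k') + (∑ k', C a' k') ≤ ∑ a'', ∑ k', C a'' k' := by
    rw [← Finset.sum_pair (f := fun a'' => ∑ k', C a'' k') hne]
    exact Finset.sum_le_sum_of_subset_of_nonneg (Finset.subset_univ _)
      (fun a'' _ _ => Finset.sum_nonneg fun k' _ => hpos a'' k')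
  rw [hsum] at h3
  linarith

lemma swap4 {K L : ℕ} (T : Fin K → Fin L → Fin K → Fin L → ℝ) :
    (∑ a, ∑ b, ∑ k, ∑ l, T k l a b) = ∑ k, ∑ l, ∑ a, ∑ b, T k l a b := by
  calc (∑ a, ∑ b, ∑ k, ∑ l, T k l a b)
      = ∑ a, ∑ k, ∑ b, ∑ l, T k l a b :=
        Finset.sum_congr rfl fun a _ => Finset.sum_comm
    _ = ∑ k, ∑ a, ∑ b, ∑ l, T k l a b := Finset.sum_comm
    _ = ∑ k, ∑ a, ∑ l, ∑ b, T k l a b :=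
        Finset.sum_congr rfl fun k _ =>
          Finset.sum_congr rfl fun a _ => Finset.sum_comm
    _ = ∑ k, ∑ l, ∑ a, ∑ b, T k l a b :=
        Finset.sum_congr rfl fun k _ => Finset.sum_comm

end aux


/-- **The population criterion is small away from permutation matrices.** Let `M₀ ∈ ℝ^{K×L}`
have no two equal rows and no two equal columns, and let `f` be twice differentiable with `f''`
bounded away from zero on the convex hull of the entries of `M₀`.  Then there is a constant
`κ > 0`, depending only on `M₀` and `f` (independent of `δ` and `η`), such that for all
`C ∈ 𝒮_K`, `D ∈ 𝒮_L` with `min_a [C1]_a > η`, `min_b [D1]_b > η` and `(C, D) ∉ 𝒫_δ × 𝒬_δ`,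
`G_{M₀}(C, D) − Σ_{a,b} [C1]_a [D1]_b f([M₀]_{ab}) ≤ −κ η² δ`. -/
theorem population_criterion_perturbation {K L : ℕ}
    (M0 : Matrix (Fin K) (Fin L) ℝ) (f : ℝ → ℝ)
    (hrows : ∀ a a', a ≠ a' → ∃ l, M0 a l ≠ M0 a' l)
    (hcols : ∀ b b', b ≠ b' → ∃ k, M0 k b ≠ M0 k b')
    (hf : ContDiff ℝ 2 f)
    (hstrict : ∃ κf > (0 : ℝ), ∀ μ ∈ convexHull ℝ {x : ℝ | ∃ k l, M0 k l = x},
      κf ≤ deriv (deriv f) μ) :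
    ∃ κ > (0 : ℝ), ∀ (C : Matrix (Fin K) (Fin K) ℝ) (D : Matrix (Fin L) (Fin L) ℝ)
      (η δ : ℝ), inS C → inS D → 0 < η → 0 < δ →
      (∀ a, η < ∑ k, C a k) → (∀ b, η < ∑ l, D b l) →
      ¬(inP δ C ∧ inP δ D) →
      popG f M0 C D - ∑ a, ∑ b, (∑ k, C a k) * (∑ l, D b l) * f (M0 a b)
        ≤ -(κ * η ^ 2 * δ) := by
  obtain ⟨κf, hκf, hκconv⟩ := hstrict
  set T1 : Finset ℝ := insert 1 ((Finset.univ : Finset (Fin K × Fin K × Fin L)).image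
    (fun t => if M0 t.1 t.2.2 = M0 t.2.1 t.2.2 then 1
      else (M0 t.1 t.2.2 - M0 t.2.1 t.2.2) ^ 2)) with hT1
  set T2 : Finset ℝ := insert 1 ((Finset.univ : Finset (Fin L × Fin L × Fin K)).image
    (fun t => if M0 t.2.2 t.1 = M0 t.2.2 t.2.1 then 1
      else (M0 t.2.2 t.1 - M0 t.2.2 t.2.1) ^ 2)) with hT2
  have hT1ne : T1.Nonempty := ⟨1, Finset.mem_insert_self _ _⟩
  have hT2ne : T2.Nonempty := ⟨1, Finset.mem_insert_self _ _⟩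
  set γ1 : ℝ := T1.min' hT1ne with hγ1
  set γ2 : ℝ := T2.min' hT2ne with hγ2
  have hγ1pos : 0 < γ1 := by
    rw [hγ1, Finset.lt_min'_iff]
    intro x hx
    rcases Finset.mem_insert.mp hx with rfl | hx
    · norm_num
    · obtain ⟨t, -, rfl⟩ := Finset.mem_image.mp hx
      split_ifs with h
      · norm_num
      · have hd := sub_ne_zero.mpr h
        positivity
  have hγ2pos : 0 < γ2 := by
    rw [hγ2, Finset.lt_min'_iff]
    intro x hx
    rcases Finset.mem_insert.mp hx with rfl | hx
    · norm_num
    · obtain ⟨t, -, rfl⟩ := Finset.mem_image.mp hx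
      split_ifs with h
      · norm_num
      · have hd := sub_ne_zero.mpr h
        positivity
  have hγ1le : ∀ (a a' : Fin K) (b : Fin L), M0 a b ≠ M0 a' b →
      γ1 ≤ (M0 a b - M0 a' b) ^ 2 := by
    intro a a' b h
    refine Finset.min'_le _ _ ?_
    refine Finset.mem_insert_of_mem (Finset.mem_image.mpr ⟨(a, a', b), Finset.mem_univ _, ?_⟩)
    simp [h]
  have hγ2le : ∀ (b b' : Fin L) (a : Fin K), M0 a b ≠ M0 a b' →
      γ2 ≤ (M0 a b - M0 a b') ^ 2 := by
    intro b b' a h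
    refine Finset.min'_le _ _ ?_
    refine Finset.mem_insert_of_mem (Finset.mem_image.mpr ⟨(b, b', a), Finset.mem_univ _, ?_⟩)
    simp [h]
  refine ⟨κf / 2 * min γ1 γ2, by positivity, ?_⟩
  intro C D η δ hC hD hη hδ hCη hDη hnot
  -- nonemptiness of index types
  have hK : 0 < K := by
    by_contra h
    have hK0 : K = 0 := by omega
    subst hK0
    have h2 := hC.2
    simp at h2
  have hL : 0 < L := by
    by_contra h
    have hL0 : L = 0 := by omega
    subst hL0
    have h2 := hD.2
    simp at h2
  haveI iK : Nonempty (Fin K) := ⟨⟨0, hK⟩⟩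
  haveI iL : Nonempty (Fin L) := ⟨⟨0, hL⟩⟩
  -- the interval containing all entries
  set E : Finset ℝ := Finset.univ.image (fun p : Fin K × Fin L => M0 p.1 p.2) with hE
  have hEne : E.Nonempty :=
    ⟨M0 (Classical.arbitrary _) (Classical.arbitrary _),
      Finset.mem_image.mpr ⟨(Classical.arbitrary _, Classical.arbitrary _),
        Finset.mem_univ _, rfl⟩⟩
  set m : ℝ := E.min' hEne with hm
  set Mx : ℝ := E.max' hEne with hMx
  have hmem : ∀ a b, M0 a b ∈ Set.Icc m Mx := by
    intro a b
    have hx : M0 a b ∈ E := Finset.mem_image.mpr ⟨(a, b), Finset.mem_univ _, rfl⟩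
    exact ⟨Finset.min'_le _ _ hx, Finset.le_max' _ _ hx⟩
  have hsub : Set.Icc m Mx ⊆ convexHull ℝ {x : ℝ | ∃ k l, M0 k l = x} := by
    have hcx : Convex ℝ (convexHull ℝ {x : ℝ | ∃ k l, M0 k l = x}) := convex_convexHull _ _
    have hmm : m ∈ convexHull ℝ {x : ℝ | ∃ k l, M0 k l = x} := by
      obtain ⟨p, -, hp⟩ := Finset.mem_image.mp (E.min'_mem hEne)
      exact subset_convexHull _ _ ⟨p.1, p.2, hp⟩
    have hMM : Mx ∈ convexHull ℝ {x : ℝ | ∃ k l, M0 k l = x} := by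
      obtain ⟨p, -, hp⟩ := Finset.mem_image.mp (E.max'_mem hEne)
      exact subset_convexHull _ _ ⟨p.1, p.2, hp⟩
    exact hcx.ordConnected.out hmm hMM
  have hf'' : ∀ t ∈ Set.Icc m Mx, κf ≤ deriv (deriv f) t := fun t ht => hκconv t (hsub ht)
  have htan : ∀ x ∈ Set.Icc m Mx, ∀ y ∈ Set.Icc m Mx,
      f x + deriv f x * (y - x) + κf / 2 * (y - x) ^ 2 ≤ f y :=
    fun x hx y hy => tangent_lb f κf m Mx hf hf'' hx hy
  set μf : Fin K → Fin L → ℝ := fun k l =>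
    (∑ a, ∑ b, C a k * M0 a b * D b l) / ((∑ a, C a k) * (∑ b, D b l)) with hμf
  set V : ℝ := ∑ k, ∑ l, ∑ a, ∑ b, C a k * D b l * (M0 a b - μf k l) ^ 2 with hV
  have hpop : popG f M0 C D = ∑ k, ∑ l, (∑ a, C a k) * (∑ b, D b l) * f (μf k l) := rfl
  have hJ : ∀ k l, (∑ a, C a k) * (∑ b, D b l) * f (μf k l)
      + κf / 2 * ∑ a, ∑ b, C a k * D b l * (M0 a b - μf k l) ^ 2
      ≤ ∑ a, ∑ b, C a k * D b l * f (M0 a b) := fun k l =>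
    jensen_block f κf m Mx htan (fun a => C a k) (fun b => D b l) M0
      (fun a => hC.1 a k) (fun b => hD.1 b l) (fun a b => hmem a b)
  have hGV : (∑ k, ∑ l, (∑ a, C a k) * (∑ b, D b l) * f (μf k l)) + κf / 2 * V
      ≤ ∑ k, ∑ l, ∑ a, ∑ b, C a k * D b l * f (M0 a b) := by
    have h := Finset.sum_le_sum (fun k (_ : k ∈ Finset.univ) =>
      Finset.sum_le_sum fun l (_ : l ∈ Finset.univ) => hJ k l)
    have e : (∑ k, ∑ l, ((∑ a, C a k) * (∑ b, D b l) * f (μf k l)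
        + κf / 2 * ∑ a, ∑ b, C a k * D b l * (M0 a b - μf k l) ^ 2))
        = (∑ k, ∑ l, (∑ a, C a k) * (∑ b, D b l) * f (μf k l)) + κf / 2 * V := by
      rw [hV]
      simp only [Finset.sum_add_distrib, Finset.mul_sum]
    rw [← e]
    exact h
  have hbase : (∑ a, ∑ b, (∑ k, C a k) * (∑ l, D b l) * f (M0 a b))
      = ∑ k, ∑ l, ∑ a, ∑ b, C a k * D b l * f (M0 a b) := by
    have step1 : ∀ (a : Fin K) (b : Fin L),
        (∑ k, C a k) * (∑ l, D b l) * f (M0 a b)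
        = ∑ k, ∑ l, C a k * D b l * f (M0 a b) := by
      intro a b
      rw [Finset.sum_mul_sum, Finset.sum_mul]
      exact Finset.sum_congr rfl fun k _ => by rw [Finset.sum_mul]
    calc (∑ a, ∑ b, (∑ k, C a k) * (∑ l, D b l) * f (M0 a b))
        = ∑ a, ∑ b, ∑ k, ∑ l, C a k * D b l * f (M0 a b) :=
          Finset.sum_congr rfl fun a _ => Finset.sum_congr rfl fun b _ => step1 a b
      _ = ∑ k, ∑ l, ∑ a, ∑ b, C a k * D b l * f (M0 a b) :=
          swap4 (fun k l a b => C a k * D b l * f (M0 a b))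
  rw [hpop, hbase]
  -- lower bound on the variance V
  have hη1 : η ≤ 1 := by
    obtain ⟨a0⟩ := iK
    have h1 : (∑ k, C a0 k) ≤ ∑ a, ∑ k, C a k :=
      Finset.single_le_sum (fun a _ => Finset.sum_nonneg fun k _ => hC.1 a k)
        (Finset.mem_univ a0)
    rw [hC.2] at h1
    exact le_of_lt (lt_of_lt_of_le (hCη a0) h1)
  have hVlb : ∃ γi, min γ1 γ2 ≤ γi ∧ 0 ≤ γi ∧ δ * η * γi ≤ V := by
    rw [not_and_or] at hnot
    rcases hnot with h | h
    · unfold inP at h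
      push_neg at h
      obtain ⟨k, a, a', hne, hge⟩ := h
      obtain ⟨b, hb⟩ := hrows a a' hne
      refine ⟨γ1, min_le_left _ _, le_of_lt hγ1pos, ?_⟩
      rw [hV]
      exact var_lb M0 C D μf δ η γ1 hC.1 hD.1 (le_of_lt hγ1pos) (le_of_lt hδ)
        (le_of_lt hη) k a a' b (sum_pair_le_one C hC.1 hC.2 k hne) hne hge
        (hγ1le a a' b hb) (le_of_lt (hDη b))
    · unfold inP at h
      push_neg at h
      obtain ⟨l, b, b', hne, hge⟩ := h
      obtain ⟨a, ha⟩ := hcols b b' hne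
      refine ⟨γ2, min_le_right _ _, le_of_lt hγ2pos, ?_⟩
      have h0 := var_lb M0.transpose D C (fun l k => μf k l) δ η γ2 hD.1 hC.1
        (le_of_lt hγ2pos) (le_of_lt hδ) (le_of_lt hη) l b b' a
        (sum_pair_le_one D hD.1 hD.2 l hne) hne hge
        (by simpa using hγ2le b b' a ha) (le_of_lt (hCη a))
      refine le_trans h0 (le_of_eq ?_)
      rw [hV]
      calc (∑ l', ∑ k, ∑ b'', ∑ a'',
              D b'' l' * C a'' k * (M0.transpose b'' a'' - μf k l') ^ 2)
          = ∑ k, ∑ l', ∑ b'', ∑ a'',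
              D b'' l' * C a'' k * (M0.transpose b'' a'' - μf k l') ^ 2 :=
            Finset.sum_comm
        _ = ∑ k, ∑ l', ∑ a'', ∑ b'',
              C a'' k * D b'' l' * (M0 a'' b'' - μf k l') ^ 2 := by
            refine Finset.sum_congr rfl fun k _ => Finset.sum_congr rfl fun l' _ => ?_
            rw [Finset.sum_comm]
            refine Finset.sum_congr rfl fun a'' _ => Finset.sum_congr rfl fun b'' _ => ?_
            rw [Matrix.transpose_apply]
            ring
  obtain ⟨γi, hmin, hγi0, hVge⟩ := hVlb
  have key : κf / 2 * min γ1 γ2 * η ^ 2 * δ ≤ κf / 2 * V := by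
    have h1 : min γ1 γ2 * η ≤ γi := by
      calc min γ1 γ2 * η ≤ min γ1 γ2 * 1 :=
            mul_le_mul_of_nonneg_left hη1 (le_of_lt (lt_min hγ1pos hγ2pos))
        _ = min γ1 γ2 := mul_one _
        _ ≤ γi := hmin
    have h2 : κf / 2 * δ * η * (min γ1 γ2 * η) ≤ κf / 2 * δ * η * γi :=
      mul_le_mul_of_nonneg_left h1 (by positivity)
    have h3 : κf / 2 * (δ * η * γi) ≤ κf / 2 * V :=
      mul_le_mul_of_nonneg_left hVge (by positivity)
    nlinarith [h2, h3]
  linarith [hGV, key]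
end
end

section
/- Let C = [C_{ak}] ∈ ℝ^{A×K} and D = [D_{bl}] ∈ ℝ^{B×L} be nonnegative matrices whose entries sum to one. Let M = [μ_{ab}] ∈ ℝ^{A×B} be a matrix with no two identical columns, let 𝓜 be the convex hull of the entries of M, and let f : ℝ → ℝ be twice differentiable and convex with f'' bounded away from zero on 𝓜. Suppose [C1]_a ≥ η for all a and D_{bl} D_{b'l} > δ for some l and some b ≠ b'. Then there exists a constant c > 0 depending only on M and f (one may take c = (κ/4) min_{a, b≠b'} (μ_{ab} − μ_{ab'})² with κ = inf_{μ∈𝓜} f''(μ)) such that Σ_{k=1}^K Σ_{l=1}^L [Cᵀ1]_k [Dᵀ1]_l f([Cᵀ M D]_{kl} / ([Cᵀ1]_k [Dᵀ1]_l)) ≤ Σ_{a=1}^A Σ_{b=1}^B [C1]_a [D1]_b f(μ_{ab}) − c η² δ / K². -/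
set_option autoImplicit false
set_option maxHeartbeats 1000000
open Finset

lemma sum_var_eq {ι : Type*} (t : Finset ι) (w x : ι → ℝ) (hw : ∑ i ∈ t, w i = 1) :
    ∑ i ∈ t, w i * (x i - ∑ j ∈ t, w j * x j)^2
      = ∑ i ∈ t, w i * (x i)^2 - (∑ i ∈ t, w i * x i)^2 := by
  set m := ∑ j ∈ t, w j * x j with hm
  have h : ∀ i ∈ t, w i * (x i - m)^2 = w i * (x i)^2 - 2*m*(w i * x i) + m^2 * w i := by
    intros; ring
  rw [Finset.sum_congr rfl h, Finset.sum_add_distrib, Finset.sum_sub_distrib,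
      ← Finset.mul_sum, ← Finset.mul_sum, hw]
  ring

lemma var_ge {ι : Type*} [DecidableEq ι] (t : Finset ι) (w x : ι → ℝ) (hw0 : ∀ i ∈ t, 0 ≤ w i)
    (hw : ∑ i ∈ t, w i = 1) {i j : ι} (hi : i ∈ t) (hj : j ∈ t) (hij : i ≠ j) :
    w i * w j * (x i - x j)^2 / 2
      ≤ ∑ k ∈ t, w k * (x k - ∑ n ∈ t, w n * x n)^2 := by
  set m := ∑ n ∈ t, w n * x n with hm
  have hsub : ({i, j} : Finset ι) ⊆ t := by
    intro z hz; simp only [Finset.mem_insert, Finset.mem_singleton] at hz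
    rcases hz with rfl | rfl <;> assumption
  have h2 : ∑ k ∈ ({i, j} : Finset ι), w k * (x k - m)^2 ≤ ∑ k ∈ t, w k * (x k - m)^2 := by
    apply Finset.sum_le_sum_of_subset_of_nonneg hsub
    intro z hz _; exact mul_nonneg (hw0 z hz) (sq_nonneg _)
  rw [Finset.sum_pair hij] at h2
  have hwi1 : w i ≤ 1 := by
    calc w i ≤ ∑ k ∈ t, w k := Finset.single_le_sum hw0 hi
    _ = 1 := hw
  have hwj1 : w j ≤ 1 := by
    calc w j ≤ ∑ k ∈ t, w k := Finset.single_le_sum hw0 hj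
    _ = 1 := hw
  have hwi := hw0 i hi
  have hwj := hw0 j hj
  nlinarith [sq_nonneg ((x i - m) + (x j - m)), mul_nonneg hwi (sq_nonneg (x i - m)),
    mul_nonneg hwj (sq_nonneg (x j - m)),
    mul_nonneg (mul_nonneg hwi hwj) (sq_nonneg ((x i - m) + (x j - m))),
    mul_nonneg (mul_nonneg hwi (sub_nonneg.mpr hwj1)) (sq_nonneg (x i - m)),
    mul_nonneg (mul_nonneg hwj (sub_nonneg.mpr hwi1)) (sq_nonneg (x j - m))]

lemma strong_jensen {S : Set ℝ} (f : ℝ → ℝ) (κ : ℝ)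
    (hg : ConvexOn ℝ S (fun t => f t - κ/2 * t^2))
    {ι : Type*} (t : Finset ι) (w x : ι → ℝ) (hw0 : ∀ i ∈ t, 0 ≤ w i)
    (hw : ∑ i ∈ t, w i = 1) (hx : ∀ i ∈ t, x i ∈ S) :
    f (∑ i ∈ t, w i * x i)
      + κ/2 * (∑ i ∈ t, w i * (x i - ∑ j ∈ t, w j * x j)^2)
      ≤ ∑ i ∈ t, w i * f (x i) := by
  have hJ := hg.map_sum_le hw0 hw hx
  simp only [smul_eq_mul] at hJ
  rw [sum_var_eq t w x hw]
  have h1 : ∑ i ∈ t, w i * (f (x i) - κ/2 * (x i)^2)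
      = ∑ i ∈ t, w i * f (x i) - κ/2 * ∑ i ∈ t, w i * (x i)^2 := by
    rw [Finset.mul_sum, ← Finset.sum_sub_distrib]
    apply Finset.sum_congr rfl; intros; ring
  rw [h1] at hJ
  linarith

lemma g_convex (S : Set ℝ) (hS : Convex ℝ S) (f : ℝ → ℝ) (hf : ContDiff ℝ 2 f)
    (κ : ℝ) (hκ : ∀ μ ∈ S, κ ≤ deriv (deriv f) μ) :
    ConvexOn ℝ S (fun t => f t - κ/2 * t^2) := by
  have hfd : Differentiable ℝ f := hf.differentiable (by norm_num)
  have hfd' : Differentiable ℝ (deriv f) := by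
    have h2 : ContDiff ℝ ((1 : ℕ) + 1) f := by exact_mod_cast hf
    exact ((contDiff_succ_iff_deriv.mp h2).2.2).differentiable (by norm_num)
  set g : ℝ → ℝ := fun t => f t - κ/2 * t^2 with hgdef
  have hgd : Differentiable ℝ g := by
    apply hfd.sub; fun_prop
  have hderiv : deriv g = fun t => deriv f t - κ * t := by
    funext t
    rw [hgdef]
    rw [deriv_fun_sub (hfd t) (by fun_prop)]
    congr 1
    rw [deriv_const_mul _ (by fun_prop)]
    simp [deriv_pow_field]
    ring
  have hderiv2 : ∀ t, deriv (deriv g) t = deriv (deriv f) t - κ := by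
    intro t
    rw [hderiv, deriv_fun_sub (hfd' t) (by fun_prop)]
    have h1 : deriv (fun t : ℝ => κ * t) t = κ := by
      simpa using deriv_const_mul κ (differentiable_id.differentiableAt (x := t))
    simp only [h1]
  apply convexOn_of_deriv2_nonneg hS (hfd.continuous.continuousOn.sub (by fun_prop))
  · exact hgd.differentiableOn
  · show DifferentiableOn ℝ (deriv g) (interior S)
    rw [hderiv]; exact (hfd'.sub (by fun_prop)).differentiableOn
  · intro x hx
    have : deriv^[2] g x = deriv (deriv g) x := by simp [Function.iterate_succ, Function.comp]
    show 0 ≤ deriv^[2] g x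
    rw [this, hderiv2]
    have := hκ x (interior_subset hx)
    linarith

/-- **Separation lemma for the population criterion.** Let `C ∈ ℝ^{A×K}` and `D ∈ ℝ^{B×L}` be
nonnegative matrices whose entries sum to one, and let `M ∈ ℝ^{A×B}` have no two identical
columns.  Let `f` be twice differentiable and convex with `f''` bounded away from zero on the
convex hull `𝓜` of the entries of `M`.  Then there is a constant `c > 0`, depending only on `M`
and `f`, such that whenever `[C1]_a ≥ η ≥ 0` for all `a` and `D_{bl} D_{b'l} > δ > 0` for some
`l` and `b ≠ b'`,
`Σ_{k,l} [Cᵀ1]_k [Dᵀ1]_l f([Cᵀ M D]_{kl}/([Cᵀ1]_k [Dᵀ1]_l))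
  ≤ Σ_{a,b} [C1]_a [D1]_b f(μ_{ab}) − c η² δ / K²`. -/
theorem population_criterion_separation {A B K L : ℕ}
    (M : Matrix (Fin A) (Fin B) ℝ) (f : ℝ → ℝ)
    (hMcols : ∀ b b', b ≠ b' → ∃ a, M a b ≠ M a b')
    (hf : ContDiff ℝ 2 f) (hconv : ConvexOn ℝ Set.univ f)
    (hstrict : ∃ κ > (0 : ℝ), ∀ μ ∈ convexHull ℝ {x : ℝ | ∃ a b, M a b = x},
      κ ≤ deriv (deriv f) μ) :
    ∃ c > (0 : ℝ), ∀ (C : Matrix (Fin A) (Fin K) ℝ) (D : Matrix (Fin B) (Fin L) ℝ)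
      (η δ : ℝ), (∀ a k, 0 ≤ C a k) → (∀ b l, 0 ≤ D b l) →
      (∑ a, ∑ k, C a k) = 1 → (∑ b, ∑ l, D b l) = 1 →
      0 ≤ η → (∀ a, η ≤ ∑ k, C a k) →
      0 < δ → (∃ l b b', b ≠ b' ∧ δ < D b l * D b' l) →
      ∑ k, ∑ l, (∑ a, C a k) * (∑ b, D b l) *
          f ((∑ a, ∑ b, C a k * M a b * D b l) / ((∑ a, C a k) * (∑ b, D b l)))
        ≤ (∑ a, ∑ b, (∑ k, C a k) * (∑ l, D b l) * f (M a b)) - c * η ^ 2 * δ / K ^ 2 := by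
  classical
  obtain ⟨κ, hκ0, hκ⟩ := hstrict
  have hMS : ∀ a b, M a b ∈ convexHull ℝ {x : ℝ | ∃ a b, M a b = x} :=
    fun a b => subset_convexHull ℝ _ ⟨a, b, rfl⟩
  have hg : ConvexOn ℝ (convexHull ℝ {x : ℝ | ∃ a b, M a b = x}) (fun t => f t - κ/2 * t^2) :=
    g_convex _ (convex_convexHull ℝ _) f hf κ hκ
  by_cases hB : ∃ b b' : Fin B, b ≠ b'
  swap
  · refine ⟨1, one_pos, ?_⟩
    intro C D η δ _ _ _ _ _ _ _ hex
    obtain ⟨l, b, b', hbb, _⟩ := hex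
    exact absurd ⟨b, b', hbb⟩ hB
  obtain ⟨bb, bb', hbbne⟩ := hB
  obtain ⟨aany, _⟩ := hMcols bb bb' hbbne
  have hchoice : ∀ p : Fin B × Fin B, ∃ a : Fin A, p.1 ≠ p.2 → M a p.1 ≠ M a p.2 := by
    intro p
    by_cases h : p.1 ≠ p.2
    · obtain ⟨a, ha⟩ := hMcols p.1 p.2 h; exact ⟨a, fun _ => ha⟩
    · exact ⟨aany, fun h' => absurd h' h⟩
  choose aa haa using hchoice
  set P : Finset (Fin B × Fin B) := univ.filter (fun p => p.1 ≠ p.2) with hP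
  have hPne : P.Nonempty := ⟨(bb, bb'), by simp [hP, hbbne]⟩
  set Δmin : ℝ := P.inf' hPne (fun p => (M (aa p) p.1 - M (aa p) p.2)^2) with hΔ
  have hΔpos : 0 < Δmin := by
    rw [hΔ, Finset.lt_inf'_iff]
    intro p hp
    have hne : p.1 ≠ p.2 := by simpa [hP] using hp
    exact pow_two_pos_of_ne_zero (sub_ne_zero.mpr (haa p hne))
  refine ⟨κ/4 * Δmin, by positivity, ?_⟩
  intro C D η δ hC hD hCsum hDsum hη hrow hδ hex
  obtain ⟨l₀, b₀, b₁, hbne, hδD⟩ := hex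
  set a₀ := aa (b₀, b₁) with ha₀
  have hΔ₀ : Δmin ≤ (M a₀ b₀ - M a₀ b₁)^2 := by
    rw [hΔ]
    exact Finset.inf'_le _ (by simp [hP, hbne])
  -- basic facts
  have hck0 : ∀ k, 0 ≤ ∑ a, C a k := fun k => Finset.sum_nonneg (fun a _ => hC a k)
  have hdl0 : ∀ l, 0 ≤ ∑ b, D b l := fun l => Finset.sum_nonneg (fun b _ => hD b l)
  have hck1 : ∀ k, (∑ a, C a k) ≤ 1 := by
    intro k
    calc (∑ a, C a k) ≤ ∑ a, ∑ k', C a k' :=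
          Finset.sum_le_sum (fun a _ =>
            Finset.single_le_sum (fun k' _ => hC a k') (mem_univ k))
      _ = 1 := hCsum
  have hdl1 : ∀ l, (∑ b, D b l) ≤ 1 := by
    intro l
    calc (∑ b, D b l) ≤ ∑ b, ∑ l', D b l' :=
          Finset.sum_le_sum (fun b _ =>
            Finset.single_le_sum (fun l' _ => hD b l') (mem_univ l))
      _ = 1 := hDsum
  have hDb₀ : 0 < D b₀ l₀ := by
    by_contra h
    push_neg at h
    nlinarith [hD b₁ l₀]
  have hDb₁ : 0 < D b₁ l₀ := by
    by_contra h
    push_neg at h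
    nlinarith [hD b₀ l₀]
  have hdll₀ : 0 < ∑ b, D b l₀ :=
    lt_of_lt_of_le hDb₀ (Finset.single_le_sum (fun b _ => hD b l₀) (mem_univ b₀))
  -- the key per-(k,l) inequality
  have key : ∀ (k : Fin K) (l : Fin L),
      (∑ a, C a k) * (∑ b, D b l) *
          f ((∑ a, ∑ b, C a k * M a b * D b l) / ((∑ a, C a k) * (∑ b, D b l)))
        ≤ (∑ a, ∑ b, C a k * D b l * f (M a b))
          - (if l = l₀ then κ/4 * Δmin * δ * (C a₀ k)^2 else 0) := by
    intro k l
    by_cases hT : (∑ a, C a k) * (∑ b, D b l) = 0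
    · rcases mul_eq_zero.mp hT with h | h
      · have hCz : ∀ a, C a k = 0 := fun a =>
          (Finset.sum_eq_zero_iff_of_nonneg (fun a _ => hC a k)).mp h a (mem_univ a)
        simp [hCz]
      · have hll : l ≠ l₀ := by
          rintro rfl
          have hDz : ∀ b, D b l = 0 := fun b =>
            (Finset.sum_eq_zero_iff_of_nonneg (fun b _ => hD b l)).mp h b (mem_univ b)
          exact absurd (hDz b₀) (ne_of_gt hDb₀)
        have hDz : ∀ b, D b l = 0 := fun b =>
          (Finset.sum_eq_zero_iff_of_nonneg (fun b _ => hD b l)).mp h b (mem_univ b)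
        simp [hDz, hll]
    · obtain ⟨h1, h2⟩ := mul_ne_zero_iff.mp hT
      have hckpos : 0 < ∑ a, C a k := lt_of_le_of_ne (hck0 k) (Ne.symm h1)
      have hdlpos : 0 < ∑ b, D b l := lt_of_le_of_ne (hdl0 l) (Ne.symm h2)
      set T : ℝ := (∑ a, C a k) * (∑ b, D b l) with hTdef
      have hTpos : 0 < T := mul_pos hckpos hdlpos
      have hT1 : T ≤ 1 := by
        rw [hTdef]
        exact mul_le_one₀ (hck1 k) (hdl0 l) (hdl1 l)
      set w : Fin A × Fin B → ℝ := fun p => C p.1 k * D p.2 l / T with hwdef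
      have hw0 : ∀ p ∈ (univ : Finset (Fin A × Fin B)), 0 ≤ w p := fun p _ =>
        div_nonneg (mul_nonneg (hC p.1 k) (hD p.2 l)) hTpos.le
      have hsumCD : ∑ p : Fin A × Fin B, C p.1 k * D p.2 l = T := by
        rw [Fintype.sum_prod_type]
        calc ∑ a, ∑ b, C a k * D b l = ∑ a, C a k * ∑ b, D b l :=
              Finset.sum_congr rfl (fun a _ => (Finset.mul_sum _ _ _).symm)
          _ = T := (Finset.sum_mul _ _ _).symm
      have hw : ∑ p : Fin A × Fin B, w p = 1 := by
        rw [hwdef]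
        simp only []
        rw [← Finset.sum_div, hsumCD, div_self hTpos.ne']
      have hmean : ∑ p : Fin A × Fin B, w p * M p.1 p.2
          = (∑ a, ∑ b, C a k * M a b * D b l) / T := by
        rw [Finset.sum_div]
        rw [Fintype.sum_prod_type]
        refine Finset.sum_congr rfl fun a _ => ?_
        rw [Finset.sum_div]
        refine Finset.sum_congr rfl fun b _ => ?_
        rw [hwdef]
        field_simp
      have hfsum : ∑ p : Fin A × Fin B, w p * f (M p.1 p.2)
          = (∑ a, ∑ b, C a k * D b l * f (M a b)) / T := by
        rw [Finset.sum_div]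
        rw [Fintype.sum_prod_type]
        refine Finset.sum_congr rfl fun a _ => ?_
        rw [Finset.sum_div]
        refine Finset.sum_congr rfl fun b _ => ?_
        rw [hwdef]
        field_simp
      by_cases hll : l = l₀
      · subst hll
        have hij : ((a₀, b₀) : Fin A × Fin B) ≠ (a₀, b₁) := by
          simp [Prod.ext_iff, hbne]
        have hSJ := strong_jensen f κ hg univ w (fun p => M p.1 p.2) hw0 hw
          (fun p _ => hMS p.1 p.2)
        have hV := var_ge univ w (fun p => M p.1 p.2) hw0 hw
          (mem_univ (a₀, b₀)) (mem_univ (a₀, b₁)) hij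
        rw [hmean, hfsum] at hSJ
        -- multiply by T
        have hwi : w (a₀, b₀) = C a₀ k * D b₀ l / T := rfl
        have hwj : w (a₀, b₁) = C a₀ k * D b₁ l / T := rfl
        have hVar0 : 0 ≤ ∑ p : Fin A × Fin B, w p * (M p.1 p.2 - ∑ n : Fin A × Fin B, w n * M n.1 n.2)^2 :=
          Finset.sum_nonneg fun p hp => mul_nonneg (hw0 p hp) (sq_nonneg _)
        -- bound the correction
        have hTw : T * (w (a₀, b₀) * w (a₀, b₁))
            = (C a₀ k * D b₀ l) * (C a₀ k * D b₁ l) / T := by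
          rw [hwi, hwj]
          field_simp
        have huv : δ * (C a₀ k)^2 ≤ (C a₀ k * D b₀ l) * (C a₀ k * D b₁ l) / T := by
          have h3 : (C a₀ k * D b₀ l) * (C a₀ k * D b₁ l)
              = (C a₀ k)^2 * (D b₀ l * D b₁ l) := by ring
          have h4 : δ * (C a₀ k)^2 ≤ (C a₀ k)^2 * (D b₀ l * D b₁ l) := by
            nlinarith [sq_nonneg (C a₀ k)]
          have h5 : (C a₀ k)^2 * (D b₀ l * D b₁ l)
              ≤ (C a₀ k)^2 * (D b₀ l * D b₁ l) / T := by
            rw [le_div_iff₀ hTpos]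
            nlinarith [mul_nonneg (mul_nonneg (sq_nonneg (C a₀ k))
              (mul_pos hDb₀ hDb₁).le) (sub_nonneg.mpr hT1)]
          rw [h3]
          linarith
        have hcorr : κ/4 * Δmin * δ * (C a₀ k)^2
            ≤ κ/2 * T * (w (a₀, b₀) * w (a₀, b₁) * ((M a₀ b₀ - M a₀ b₁)^2) / 2) := by
          have e1 : κ/2 * T * (w (a₀, b₀) * w (a₀, b₁) * ((M a₀ b₀ - M a₀ b₁)^2) / 2)
              = κ/4 * ((T * (w (a₀, b₀) * w (a₀, b₁))) * (M a₀ b₀ - M a₀ b₁)^2) := by ring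
          rw [e1, hTw]
          have h6 : Δmin * (δ * (C a₀ k)^2)
              ≤ (M a₀ b₀ - M a₀ b₁)^2 * ((C a₀ k * D b₀ l) * (C a₀ k * D b₁ l) / T) := by
            apply mul_le_mul hΔ₀ huv (by positivity) (sq_nonneg _)
          calc κ/4 * Δmin * δ * (C a₀ k)^2 = κ/4 * (Δmin * (δ * (C a₀ k)^2)) := by ring
            _ ≤ κ/4 * ((M a₀ b₀ - M a₀ b₁)^2 * ((C a₀ k * D b₀ l) * (C a₀ k * D b₁ l) / T)) := by
                apply mul_le_mul_of_nonneg_left h6 (by positivity)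
            _ = (C a₀ k * D b₀ l) * (C a₀ k * D b₁ l) / T * (M a₀ b₀ - M a₀ b₁)^2 * (κ/4) := by ring
            _ = _ := by rw [← hTw]; ring
        -- combine
        simp only [] at hSJ hV
        have hVmul : κ/2 * T * (w (a₀, b₀) * w (a₀, b₁) * ((M a₀ b₀ - M a₀ b₁)^2) / 2)
            ≤ κ/2 * T * (∑ p : Fin A × Fin B, w p *
              (M p.1 p.2 - (∑ a, ∑ b, C a k * M a b * D b l) / T)^2) := by
          apply mul_le_mul_of_nonneg_left _ (by positivity)
          rw [← hmean]
          simpa using hV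
        rw [if_pos rfl]
        have hdiv : T * ((∑ a, ∑ b, C a k * D b l * f (M a b)) / T)
            = ∑ a, ∑ b, C a k * D b l * f (M a b) := by
          field_simp
        have hmul2 : T * f ((∑ a, ∑ b, C a k * M a b * D b l) / T)
            + κ/2 * T * (∑ p : Fin A × Fin B, w p *
              (M p.1 p.2 - (∑ a, ∑ b, C a k * M a b * D b l) / T)^2)
            ≤ ∑ a, ∑ b, C a k * D b l * f (M a b) := by
          calc T * f ((∑ a, ∑ b, C a k * M a b * D b l) / T)
              + κ/2 * T * (∑ p : Fin A × Fin B, w p *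
                (M p.1 p.2 - (∑ a, ∑ b, C a k * M a b * D b l) / T)^2)
              = T * (f ((∑ a, ∑ b, C a k * M a b * D b l) / T)
                + κ/2 * (∑ p : Fin A × Fin B, w p *
                  (M p.1 p.2 - (∑ a, ∑ b, C a k * M a b * D b l) / T)^2)) := by ring
            _ ≤ T * ((∑ a, ∑ b, C a k * D b l * f (M a b)) / T) :=
                mul_le_mul_of_nonneg_left hSJ hTpos.le
            _ = _ := hdiv
        linarith [hcorr.trans hVmul, hmul2]
      · rw [if_neg hll]
        have hJ := hconv.map_sum_le (t := univ) hw0 hw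
          (fun p _ => Set.mem_univ (M p.1 p.2))
        simp only [smul_eq_mul] at hJ
        rw [hmean, hfsum] at hJ
        have hmul := mul_le_mul_of_nonneg_left hJ hTpos.le
        have hdiv : T * ((∑ a, ∑ b, C a k * D b l * f (M a b)) / T)
            = ∑ a, ∑ b, C a k * D b l * f (M a b) := by
          field_simp
        rw [hdiv] at hmul
        linarith
  -- sum up
  have hsum1 : ∑ k, ∑ l, (∑ a, C a k) * (∑ b, D b l) *
          f ((∑ a, ∑ b, C a k * M a b * D b l) / ((∑ a, C a k) * (∑ b, D b l)))
      ≤ ∑ k, ∑ l, ((∑ a, ∑ b, C a k * D b l * f (M a b))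
          - (if l = l₀ then κ/4 * Δmin * δ * (C a₀ k)^2 else 0)) := by
    apply Finset.sum_le_sum
    intro k _
    apply Finset.sum_le_sum
    intro l _
    exact key k l
  have hre : ∑ k, ∑ l, ∑ a, ∑ b, C a k * D b l * f (M a b)
      = ∑ a, ∑ b, (∑ k, C a k) * (∑ l, D b l) * f (M a b) := by
    have step1 : ∀ (a : Fin A) (b : Fin B),
        (∑ k, C a k) * (∑ l, D b l) * f (M a b)
          = ∑ k, ∑ l, C a k * D b l * f (M a b) := by
      intro a b
      rw [Finset.sum_mul_sum, Finset.sum_mul]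
      exact Finset.sum_congr rfl fun k _ => Finset.sum_mul _ _ _
    calc ∑ k, ∑ l, ∑ a, ∑ b, C a k * D b l * f (M a b)
        = ∑ k, ∑ a, ∑ l, ∑ b, C a k * D b l * f (M a b) :=
          Finset.sum_congr rfl fun k _ => Finset.sum_comm
      _ = ∑ a, ∑ k, ∑ l, ∑ b, C a k * D b l * f (M a b) := Finset.sum_comm
      _ = ∑ a, ∑ k, ∑ b, ∑ l, C a k * D b l * f (M a b) :=
          Finset.sum_congr rfl fun a _ =>
            Finset.sum_congr rfl fun k _ => Finset.sum_comm
      _ = ∑ a, ∑ b, ∑ k, ∑ l, C a k * D b l * f (M a b) :=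
          Finset.sum_congr rfl fun a _ => Finset.sum_comm
      _ = ∑ a, ∑ b, (∑ k, C a k) * (∑ l, D b l) * f (M a b) :=
          Finset.sum_congr rfl fun a _ => Finset.sum_congr rfl fun b _ => (step1 a b).symm
  have hcorrsum : ∑ k, ∑ l, (if l = l₀ then κ/4 * Δmin * δ * (C a₀ k)^2 else 0)
      = κ/4 * Δmin * δ * ∑ k, (C a₀ k)^2 := by
    rw [Finset.mul_sum]
    refine Finset.sum_congr rfl fun k _ => ?_
    simp
  have hK : 0 < K := by
    rcases Nat.eq_zero_or_pos K with h | h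
    · subst h
      simp at hCsum
    · exact h
  have hcs : η^2 ≤ (K : ℝ) * ∑ k, (C a₀ k)^2 := by
    have h1 : (∑ k, C a₀ k)^2 ≤ (K : ℝ) * ∑ k, (C a₀ k)^2 := by
      have := sq_sum_le_card_mul_sum_sq (s := (univ : Finset (Fin K))) (f := fun k => C a₀ k)
      simpa using this
    have h2 : η^2 ≤ (∑ k, C a₀ k)^2 := by
      apply pow_le_pow_left₀ hη (hrow a₀)
    linarith
  have hfinal : κ/4 * Δmin * η^2 * δ / K^2 ≤ κ/4 * Δmin * δ * ∑ k, (C a₀ k)^2 := by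
    rw [div_le_iff₀ (by positivity : (0:ℝ) < (K:ℝ)^2)]
    have hK1 : (1:ℝ) ≤ (K:ℝ) := by exact_mod_cast hK
    have hsq0 : 0 ≤ ∑ k, (C a₀ k)^2 := Finset.sum_nonneg fun k _ => sq_nonneg _
    have h9 : η^2 ≤ (K:ℝ)^2 * ∑ k, (C a₀ k)^2 := by
      nlinarith [mul_nonneg (mul_nonneg (by linarith : (0:ℝ) ≤ (K:ℝ))
        (sub_nonneg.mpr hK1)) hsq0]
    calc κ/4 * Δmin * η^2 * δ = (κ/4 * Δmin * δ) * η^2 := by ring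
      _ ≤ (κ/4 * Δmin * δ) * ((K:ℝ)^2 * ∑ k, (C a₀ k)^2) :=
          mul_le_mul_of_nonneg_left h9 (by positivity)
      _ = κ/4 * Δmin * δ * (∑ k, (C a₀ k)^2) * (K:ℝ)^2 := by ring
  calc ∑ k, ∑ l, (∑ a, C a k) * (∑ b, D b l) *
          f ((∑ a, ∑ b, C a k * M a b * D b l) / ((∑ a, C a k) * (∑ b, D b l)))
      ≤ ∑ k, ∑ l, ((∑ a, ∑ b, C a k * D b l * f (M a b))
          - (if l = l₀ then κ/4 * Δmin * δ * (C a₀ k)^2 else 0)) := hsum1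
    _ = (∑ k, ∑ l, ∑ a, ∑ b, C a k * D b l * f (M a b))
          - ∑ k, ∑ l, (if l = l₀ then κ/4 * Δmin * δ * (C a₀ k)^2 else 0) := by
        rw [← Finset.sum_sub_distrib]
        refine Finset.sum_congr rfl fun k _ => ?_
        rw [← Finset.sum_sub_distrib]
    _ = (∑ a, ∑ b, (∑ k, C a k) * (∑ l, D b l) * f (M a b))
          - κ/4 * Δmin * δ * ∑ k, (C a₀ k)^2 := by rw [hre, hcorrsum]
    _ ≤ (∑ a, ∑ b, (∑ k, C a k) * (∑ l, D b l) * f (M a b))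
          - κ/4 * Δmin * η^2 * δ / K^2 := by linarith
    _ = (∑ a, ∑ b, (∑ k, C a k) * (∑ l, D b l) * f (M a b))
          - κ/4 * Δmin * η^2 * δ / K^2 := rfl
end

section
/- Let M₀ = ρ^{-1}M ∈ ℝ^{K×L} and choose τ > 0 such that min_{a≠a', b} (μ_{ab} − μ_{a'b})² ≥ τ and min_{a, b≠b'} (μ_{ab} − μ_{ab'})² ≥ τ. Let f be the Gaussian rate function f(μ) = μ²/2 (so f'' ≡ 1). Then for all ε > 0, if (g,h) ∈ 𝒥_ε and (C(g), D(h)) ∉ 𝒫_δ ∩ 𝒬_δ, then G_{M₀}(C, D) − Σ_{a,b} [C1]_a [D1]_b f([M₀]_{ab}) ≤ −τ ε² δ / (4 min{K², L²}). -/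
set_option autoImplicit false

noncomputable section

/-- Proportion of indices with label `k` under labeling `g`. -/
def phat {m K : ℕ} (g : Fin m → Fin K) (k : Fin K) : ℝ :=
  (∑ i, if g i = k then (1 : ℝ) else 0) / m

/-- The set `𝒥_ε` of nontrivial label assignments. -/
def Jset {m n K L : ℕ} (ε : ℝ) (g : Fin m → Fin K) (h : Fin n → Fin L) : Prop :=
  (∀ k, ε < phat g k) ∧ (∀ l, ε < phat h l)

/-- Normalized confusion matrix `C_{ak}(g)` (rows: true classes, columns: labels). -/
def confus {m K : ℕ} (c g : Fin m → Fin K) : Matrix (Fin K) (Fin K) ℝ :=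
  fun a k => (∑ i, if c i = a ∧ g i = k then (1 : ℝ) else 0) / m

open Finset in
private lemma lagrange_aux {ι : Type*} [Fintype ι] (u z : ι → ℝ) :
    ∑ i, ∑ j, u i * u j * (z i - z j) ^ 2
      = 2 * ((∑ i, u i) * (∑ i, u i * z i ^ 2) - (∑ i, u i * z i) ^ 2) := by
  have e1 : (∑ i, u i) * (∑ i, u i * z i ^ 2) = ∑ i, ∑ j, u i * (u j * z j ^ 2) :=
    Finset.sum_mul_sum _ _ _ _
  have e2 : (∑ i, u i * z i) * (∑ i, u i * z i) = ∑ i, ∑ j, (u i * z i) * (u j * z j) :=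
    Finset.sum_mul_sum _ _ _ _
  have e3 : (∑ i, u i * z i ^ 2) * (∑ i, u i) = ∑ i, ∑ j, (u i * z i ^ 2) * u j :=
    Finset.sum_mul_sum _ _ _ _
  have lhs : ∑ i, ∑ j, u i * u j * (z i - z j) ^ 2
      = (∑ i, ∑ j, (u i * z i ^ 2) * u j) - 2 * (∑ i, ∑ j, (u i * z i) * (u j * z j))
        + ∑ i, ∑ j, u i * (u j * z j ^ 2) := by
    rw [Finset.mul_sum, ← Finset.sum_sub_distrib, ← Finset.sum_add_distrib]
    refine Finset.sum_congr rfl fun i _ => ?_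
    rw [Finset.mul_sum, ← Finset.sum_sub_distrib, ← Finset.sum_add_distrib]
    exact Finset.sum_congr rfl fun j _ => by ring
  rw [lhs, ← e1, ← e2, ← e3]
  ring

open Finset in
private lemma cell_bound_aux {ι : Type*} [Fintype ι] (u z : ι → ℝ)
    (hs : 0 < ∑ i, u i) (Q : ℝ)
    (hQ : Q ≤ ∑ i, ∑ j, u i * u j * (z i - z j) ^ 2) :
    (∑ i, u i) * (((∑ i, u i * z i) / (∑ i, u i)) ^ 2 / 2) - (∑ i, u i * z i ^ 2) / 2
      ≤ -(Q / (4 * (∑ i, u i))) := by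
  have hl := lagrange_aux u z
  set S := ∑ i, u i
  set X := ∑ i, u i * z i
  set Y := ∑ i, u i * z i ^ 2
  set DS := ∑ i, ∑ j, u i * u j * (z i - z j) ^ 2
  have e : S * ((X / S) ^ 2 / 2) - Y / 2 = -(DS / (4 * S)) := by
    field_simp
    nlinarith [hl]
  rw [e]
  apply neg_le_neg
  gcongr

open Finset in
private lemma main_bound_aux {K L : ℕ} (hL : 0 < L)
    (C : Matrix (Fin K) (Fin K) ℝ) (D : Matrix (Fin L) (Fin L) ℝ)
    (M0 : Matrix (Fin K) (Fin L) ℝ) (τ δ : ℝ) (hτ : 0 < τ) (hδ : 0 < δ)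
    (hC0 : ∀ a k, 0 ≤ C a k) (hD0 : ∀ b l, 0 ≤ D b l)
    (hS : ∀ k, 0 < ∑ a, C a k) (hT : ∀ l, 0 < ∑ b, D b l)
    (hSsum : ∑ k, ∑ a, C a k = 1) (hTsum : ∑ l, ∑ b, D b l = 1)
    (hrows : ∀ a a' b, a ≠ a' → τ ≤ (M0 a b - M0 a' b) ^ 2)
    (k₀ a₀ a₀' : Fin K) (hne : a₀ ≠ a₀') (hbad : δ ≤ C a₀ k₀ * C a₀' k₀) :
    popG (fun μ => μ ^ 2 / 2) M0 C D
      - ∑ a, ∑ b, (∑ k, C a k) * (∑ l, D b l) * (M0 a b ^ 2 / 2)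
      ≤ -(τ * δ / (4 * L)) := by
  classical
  set u : Fin K → Fin L → (Fin K × Fin L) → ℝ := fun k l p => C p.1 k * D p.2 l with hu
  set z : Fin K × Fin L → ℝ := fun p => M0 p.1 p.2 with hz
  have husum : ∀ k l, ∑ p, u k l p = (∑ a, C a k) * (∑ b, D b l) := by
    intro k l
    rw [Finset.sum_mul_sum]
    exact Fintype.sum_prod_type _
  have hupos : ∀ k l, 0 < ∑ p, u k l p := fun k l =>
    (husum k l) ▸ mul_pos (hS k) (hT l)
  have hunn : ∀ k l p, 0 ≤ u k l p := fun k l p => mul_nonneg (hC0 _ _) (hD0 _ _)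
  have hX : ∀ k l, ∑ p, u k l p * z p = ∑ a, ∑ b, C a k * M0 a b * D b l := by
    intro k l
    rw [Fintype.sum_prod_type]
    exact Finset.sum_congr rfl fun a _ => Finset.sum_congr rfl fun b _ => by
      simp only [hu, hz]; ring
  have e1 : popG (fun μ => μ ^ 2 / 2) M0 C D
      = ∑ k, ∑ l, ((∑ p, u k l p) *
          (((∑ p, u k l p * z p) / (∑ p, u k l p)) ^ 2 / 2)) := by
    unfold popG
    refine Finset.sum_congr rfl fun k _ => Finset.sum_congr rfl fun l _ => ?_
    rw [husum, hX]
  have e2 : ∑ a, ∑ b, (∑ k, C a k) * (∑ l, D b l) * (M0 a b ^ 2 / 2)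
      = ∑ k, ∑ l, (∑ p, u k l p * z p ^ 2) / 2 := by
    calc ∑ a, ∑ b, (∑ k, C a k) * (∑ l, D b l) * (M0 a b ^ 2 / 2)
        = ∑ p : Fin K × Fin L, (∑ k, C p.1 k) * (∑ l, D p.2 l) * (M0 p.1 p.2 ^ 2 / 2) :=
          (Fintype.sum_prod_type (f := fun p : Fin K × Fin L =>
            (∑ k, C p.1 k) * (∑ l, D p.2 l) * (M0 p.1 p.2 ^ 2 / 2))).symm
      _ = ∑ p : Fin K × Fin L, ∑ q : Fin K × Fin L,
            C p.1 q.1 * D p.2 q.2 * (M0 p.1 p.2 ^ 2 / 2) := by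
          refine Finset.sum_congr rfl fun p _ => ?_
          rw [Finset.sum_mul_sum, Finset.sum_mul]
          simp_rw [Finset.sum_mul]
          exact (Fintype.sum_prod_type (f := fun q : Fin K × Fin L =>
            C p.1 q.1 * D p.2 q.2 * (M0 p.1 p.2 ^ 2 / 2))).symm
      _ = ∑ q : Fin K × Fin L, ∑ p : Fin K × Fin L,
            C p.1 q.1 * D p.2 q.2 * (M0 p.1 p.2 ^ 2 / 2) := Finset.sum_comm
      _ = ∑ k, ∑ l, (∑ p, u k l p * z p ^ 2) / 2 := by
          rw [Fintype.sum_prod_type]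
          refine Finset.sum_congr rfl fun k _ => Finset.sum_congr rfl fun l _ => ?_
          rw [Finset.sum_div]
          exact Finset.sum_congr rfl fun p _ => by simp only [hu, hz]; ring
  have hub : ∀ k l,
      (∑ p, u k l p) * (((∑ p, u k l p * z p) / (∑ p, u k l p)) ^ 2 / 2)
        - (∑ p, u k l p * z p ^ 2) / 2
      ≤ (if k = k₀ then
          -(τ * δ * (∑ b, D b l ^ 2) / (4 * ((∑ a, C a k₀) * (∑ b, D b l)))) else 0) := by
    intro k l
    by_cases hk : k = k₀
    · subst hk
      rw [if_pos rfl]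
      have step1 : ∀ b, τ * δ * D b l ^ 2
          ≤ u k l (a₀, b) * u k l (a₀', b) * (z (a₀, b) - z (a₀', b)) ^ 2 := by
        intro b
        have h1 := hrows a₀ a₀' b hne
        have h2 : τ * δ ≤ (z (a₀, b) - z (a₀', b)) ^ 2 * (C a₀ k * C a₀' k) :=
          mul_le_mul h1 hbad hδ.le (sq_nonneg _)
        calc τ * δ * D b l ^ 2
            ≤ ((z (a₀, b) - z (a₀', b)) ^ 2 * (C a₀ k * C a₀' k)) * D b l ^ 2 :=
              mul_le_mul_of_nonneg_right h2 (sq_nonneg _)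
          _ = u k l (a₀, b) * u k l (a₀', b) * (z (a₀, b) - z (a₀', b)) ^ 2 := by
              simp only [hu, hz]; ring
      have hQ : τ * δ * (∑ b, D b l ^ 2)
          ≤ ∑ p, ∑ q, u k l p * u k l q * (z p - z q) ^ 2 := by
        calc τ * δ * (∑ b, D b l ^ 2) = ∑ b, τ * δ * D b l ^ 2 := Finset.mul_sum _ _ _
          _ ≤ ∑ b, u k l (a₀, b) * u k l (a₀', b) * (z (a₀, b) - z (a₀', b)) ^ 2 :=
              Finset.sum_le_sum fun b _ => step1 b
          _ = ∑ p : Fin K × Fin L, (if p.1 = a₀ then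
                u k l p * u k l (a₀', p.2) * (z p - z (a₀', p.2)) ^ 2 else 0) := by
              symm
              rw [Fintype.sum_prod_type (f := fun p : Fin K × Fin L => if p.1 = a₀ then
                u k l p * u k l (a₀', p.2) * (z p - z (a₀', p.2)) ^ 2 else 0)]
              rw [Finset.sum_comm]
              refine Finset.sum_congr rfl fun b _ => ?_
              simp [Finset.sum_ite_eq']
          _ ≤ ∑ p, ∑ q, u k l p * u k l q * (z p - z q) ^ 2 := by
              refine Finset.sum_le_sum fun p _ => ?_
              by_cases hp : p.1 = a₀
              · rw [if_pos hp]
                exact Finset.single_le_sum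
                  (f := fun q => u k l p * u k l q * (z p - z q) ^ 2)
                  (fun q _ => mul_nonneg (mul_nonneg (hunn k l p) (hunn k l q)) (sq_nonneg _))
                  (Finset.mem_univ (a₀', p.2))
              · rw [if_neg hp]
                exact Finset.sum_nonneg fun q _ =>
                  mul_nonneg (mul_nonneg (hunn k l p) (hunn k l q)) (sq_nonneg _)
      rw [← husum k l]
      exact cell_bound_aux (u k l) z (hupos k l) _ hQ
    · simp only [if_neg hk]
      have hcb := cell_bound_aux (u k l) z (hupos k l) 0
        (Finset.sum_nonneg fun p _ => Finset.sum_nonneg fun q _ =>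
          mul_nonneg (mul_nonneg (hunn k l p) (hunn k l q)) (sq_nonneg _))
      simpa using hcb
  have sum_ite : ∑ k, ∑ l, (if k = k₀ then
        -(τ * δ * (∑ b, D b l ^ 2) / (4 * ((∑ a, C a k₀) * (∑ b, D b l)))) else 0)
      = ∑ l, -(τ * δ * (∑ b, D b l ^ 2) / (4 * ((∑ a, C a k₀) * (∑ b, D b l)))) := by
    have h : ∀ k, ∑ l, (if k = k₀ then
        -(τ * δ * (∑ b, D b l ^ 2) / (4 * ((∑ a, C a k₀) * (∑ b, D b l)))) else 0)
        = if k = k₀ then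
            ∑ l, -(τ * δ * (∑ b, D b l ^ 2) / (4 * ((∑ a, C a k₀) * (∑ b, D b l)))) else 0 := by
      intro k; split <;> simp
    simp_rw [h]
    simp [Finset.sum_ite_eq']
  have hSk1 : ∑ a, C a k₀ ≤ 1 :=
    hSsum ▸ Finset.single_le_sum (f := fun k => ∑ a, C a k)
      (fun k _ => (hS k).le) (Finset.mem_univ k₀)
  have last : ∑ l, -(τ * δ * (∑ b, D b l ^ 2) / (4 * ((∑ a, C a k₀) * (∑ b, D b l))))
      ≤ -(τ * δ / (4 * L)) := by
    have perl : ∀ l, -(τ * δ * (∑ b, D b l ^ 2) / (4 * ((∑ a, C a k₀) * (∑ b, D b l))))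
        ≤ -(τ * δ / (4 * L) * (∑ b, D b l)) := by
      intro l
      have CS : (∑ b, D b l) ^ 2 ≤ (L : ℝ) * ∑ b, D b l ^ 2 := by
        have := sum_mul_sq_le_sq_mul_sq (univ : Finset (Fin L)) (fun _ => (1:ℝ))
          (fun b => D b l)
        simpa [sq] using this
      apply neg_le_neg
      have hs0 := hS k₀
      have ht0 := hT l
      have hL0 : (0:ℝ) < L := by exact_mod_cast hL
      rw [div_mul_eq_mul_div, div_le_div_iff₀ (by positivity) (by positivity)]
      nlinarith [mul_pos hτ hδ,
        mul_le_mul_of_nonneg_left CS (mul_pos hτ hδ).le,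
        mul_nonneg (mul_pos hτ hδ).le
          (mul_nonneg (sub_nonneg.2 hSk1) (sq_nonneg (∑ b, D b l)))]
    calc ∑ l, -(τ * δ * (∑ b, D b l ^ 2) / (4 * ((∑ a, C a k₀) * (∑ b, D b l))))
        ≤ ∑ l, -(τ * δ / (4 * L) * (∑ b, D b l)) := Finset.sum_le_sum fun l _ => perl l
      _ = -(τ * δ / (4 * L)) := by
          rw [Finset.sum_neg_distrib, ← Finset.mul_sum, hTsum, mul_one]
  rw [e1, e2, ← Finset.sum_sub_distrib]
  simp_rw [← Finset.sum_sub_distrib]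
  calc ∑ k, ∑ l, ((∑ p, u k l p) * (((∑ p, u k l p * z p) / (∑ p, u k l p)) ^ 2 / 2)
          - (∑ p, u k l p * z p ^ 2) / 2)
      ≤ ∑ k, ∑ l, (if k = k₀ then
          -(τ * δ * (∑ b, D b l ^ 2) / (4 * ((∑ a, C a k₀) * (∑ b, D b l)))) else 0) :=
        Finset.sum_le_sum fun k _ => Finset.sum_le_sum fun l _ => hub k l
    _ = ∑ l, -(τ * δ * (∑ b, D b l ^ 2) / (4 * ((∑ a, C a k₀) * (∑ b, D b l)))) := sum_ite
    _ ≤ -(τ * δ / (4 * L)) := last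

private lemma confus_nonneg_aux {m K : ℕ} (c g : Fin m → Fin K) (a k : Fin K) :
    0 ≤ confus c g a k := by
  unfold confus
  apply div_nonneg _ (Nat.cast_nonneg m)
  exact Finset.sum_nonneg fun i _ => by positivity

private lemma sum_confus_col_aux {m K : ℕ} (c g : Fin m → Fin K) (k : Fin K) :
    ∑ a, confus c g a k = phat g k := by
  unfold confus phat
  rw [← Finset.sum_div]
  congr 1
  rw [Finset.sum_comm]
  refine Finset.sum_congr rfl fun i _ => ?_
  by_cases h : g i = k <;> simp [h]

private lemma sum_phat_aux {m K : ℕ} (g : Fin m → Fin K) (hm : m ≠ 0) :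
    ∑ k, phat g k = 1 := by
  unfold phat
  rw [← Finset.sum_div, Finset.sum_comm]
  have h2 : ∑ i : Fin m, ∑ k, (if g i = k then (1:ℝ) else 0) = m := by simp
  rw [h2]
  exact div_self (by exact_mod_cast hm)

private lemma popG_transpose_aux {K L : ℕ} (f : ℝ → ℝ) (M0 : Matrix (Fin K) (Fin L) ℝ)
    (C : Matrix (Fin K) (Fin K) ℝ) (D : Matrix (Fin L) (Fin L) ℝ) :
    popG f M0.transpose D C = popG f M0 C D := by
  unfold popG
  rw [Finset.sum_comm]
  refine Finset.sum_congr rfl fun k _ => Finset.sum_congr rfl fun l _ => ?_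
  have harg : ∑ b, ∑ a, D b l * M0.transpose b a * C a k
      = ∑ a, ∑ b, C a k * M0 a b * D b l := by
    rw [Finset.sum_comm]
    exact Finset.sum_congr rfl fun a _ => Finset.sum_congr rfl fun b _ => by
      rw [Matrix.transpose_apply]; ring
  rw [harg, mul_comm (∑ b, D b l) (∑ a, C a k)]

private lemma true_transpose_aux {K L : ℕ} (M0 : Matrix (Fin K) (Fin L) ℝ)
    (C : Matrix (Fin K) (Fin K) ℝ) (D : Matrix (Fin L) (Fin L) ℝ) :
    ∑ b, ∑ a, (∑ l, D b l) * (∑ k, C a k) * (M0.transpose b a ^ 2 / 2)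
      = ∑ a, ∑ b, (∑ k, C a k) * (∑ l, D b l) * (M0 a b ^ 2 / 2) := by
  rw [Finset.sum_comm]
  exact Finset.sum_congr rfl fun a _ => Finset.sum_congr rfl fun b _ => by
    rw [Matrix.transpose_apply]; ring


/-- **The population criterion is maximized at the true labels (Gaussian rate, quantitative
version).** With `M₀ = ρ⁻¹M`, `τ > 0` separating the rows and the columns of `M₀`, and
`f(μ) = μ²/2` the Gaussian rate function: for all `ε > 0`, if `(g,h) ∈ 𝒥_ε` and
`(C(g), D(h)) ∉ 𝒫_δ ∩ 𝒬_δ`, then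
`G_{M₀}(C, D) − Σ_{a,b} [C1]_a [D1]_b f([M₀]_{ab}) ≤ −τ ε² δ / (4 min{K², L²})`. -/
theorem population_criterion_gap_gaussian {m n K L : ℕ}
    (c : Fin m → Fin K) (d : Fin n → Fin L)
    (M : Matrix (Fin K) (Fin L) ℝ) (ρ : ℝ) (hρ : 0 < ρ)
    (M0 : Matrix (Fin K) (Fin L) ℝ) (hM0 : ∀ k l, M0 k l = M k l / ρ)
    (τ : ℝ) (hτ : 0 < τ)
    (hτrows : ∀ a a' b, a ≠ a' → τ ≤ (M0 a b - M0 a' b) ^ 2)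
    (hτcols : ∀ a b b', b ≠ b' → τ ≤ (M0 a b - M0 a b') ^ 2)
    (f : ℝ → ℝ) (hf : f = fun μ => μ ^ 2 / 2)
    (ε δ : ℝ) (hε : 0 < ε) (hδ : 0 < δ)
    (g : Fin m → Fin K) (h : Fin n → Fin L) (hJ : Jset ε g h)
    (hout : ¬(inP δ (confus c g) ∧ inP δ (confus d h))) :
    popG f M0 (confus c g) (confus d h)
        - ∑ a, ∑ b, (∑ k, confus c g a k) * (∑ l, confus d h b l) * f (M0 a b)
      ≤ -(τ * ε ^ 2 * δ / (4 * min ((K : ℝ) ^ 2) ((L : ℝ) ^ 2))) := by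
  simp only [hf]
  rcases Nat.eq_zero_or_pos K with hK0 | hK
  · subst hK0
    have hmin0 : min (((0:ℕ):ℝ) ^ 2) ((L:ℝ) ^ 2) = 0 := by
      rw [show (((0:ℕ):ℝ)) ^ 2 = 0 by norm_num]
      exact min_eq_left (by positivity)
    simp [popG, hmin0]
  rcases Nat.eq_zero_or_pos L with hL0 | hL
  · subst hL0
    have hmin0 : min ((K:ℝ) ^ 2) (((0:ℕ):ℝ) ^ 2) = 0 := by
      rw [show (((0:ℕ):ℝ)) ^ 2 = 0 by norm_num]
      exact min_eq_right (by positivity)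
    simp [popG, hmin0]
  have hm : m ≠ 0 := by
    intro h0
    have h1 := hJ.1 ⟨0, hK⟩
    subst h0
    simp [phat] at h1
    linarith
  have hn : n ≠ 0 := by
    intro h0
    have h1 := hJ.2 ⟨0, hL⟩
    subst h0
    simp [phat] at h1
    linarith
  set C := confus c g with hC
  set D := confus d h with hD
  have hC0 : ∀ a k, 0 ≤ C a k := fun a k => confus_nonneg_aux c g a k
  have hD0 : ∀ b l, 0 ≤ D b l := fun b l => confus_nonneg_aux d h b l
  have hS : ∀ k, 0 < ∑ a, C a k := fun k => by
    rw [hC, sum_confus_col_aux c g k]; linarith [hJ.1 k]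
  have hT : ∀ l, 0 < ∑ b, D b l := fun l => by
    rw [hD, sum_confus_col_aux d h l]; linarith [hJ.2 l]
  have hSsum : ∑ k, ∑ a, C a k = 1 := by
    calc ∑ k, ∑ a, C a k = ∑ k, phat g k :=
          Finset.sum_congr rfl fun k _ => sum_confus_col_aux c g k
      _ = 1 := sum_phat_aux g hm
  have hTsum : ∑ l, ∑ b, D b l = 1 := by
    calc ∑ l, ∑ b, D b l = ∑ l, phat h l :=
          Finset.sum_congr rfl fun l _ => sum_confus_col_aux d h l
      _ = 1 := sum_phat_aux h hn
  have hKR : (1:ℝ) ≤ (K:ℝ) := by exact_mod_cast hK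
  have hLR : (1:ℝ) ≤ (L:ℝ) := by exact_mod_cast hL
  have hεK : ε * K < 1 := by
    haveI : Nonempty (Fin K) := ⟨⟨0, hK⟩⟩
    have h1 : ∑ _k : Fin K, ε < ∑ k, phat g k :=
      Finset.sum_lt_sum_of_nonempty Finset.univ_nonempty fun k _ => hJ.1 k
    rw [sum_phat_aux g hm] at h1
    simpa [Finset.sum_const, Finset.card_univ, nsmul_eq_mul, mul_comm] using h1
  have hεL : ε * L < 1 := by
    haveI : Nonempty (Fin L) := ⟨⟨0, hL⟩⟩
    have h1 : ∑ _l : Fin L, ε < ∑ l, phat h l :=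
      Finset.sum_lt_sum_of_nonempty Finset.univ_nonempty fun l _ => hJ.2 l
    rw [sum_phat_aux h hn] at h1
    simpa [Finset.sum_const, Finset.card_univ, nsmul_eq_mul, mul_comm] using h1
  have hε1 : ε < 1 := by nlinarith
  have hmin1 : (1:ℝ) ≤ min ((K:ℝ) ^ 2) ((L:ℝ) ^ 2) :=
    le_min (by nlinarith) (by nlinarith)
  have hminpos : (0:ℝ) < min ((K:ℝ) ^ 2) ((L:ℝ) ^ 2) := by linarith
  rcases not_and_or.mp hout with hP | hP
  · simp only [inP] at hP
    push_neg at hP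
    obtain ⟨k₀, a₀, a₀', hne, hbad⟩ := hP
    have hmb := main_bound_aux hL C D M0 τ δ hτ hδ hC0 hD0 hS hT hSsum hTsum
      hτrows k₀ a₀ a₀' hne hbad
    refine le_trans hmb ?_
    apply neg_le_neg
    have hLpos : (0:ℝ) < L := by linarith
    rw [div_le_div_iff₀ (by positivity) (by positivity)]
    have h1 : ε ^ 2 * L ≤ 1 := by nlinarith [mul_lt_mul_of_pos_left hεL hε]
    nlinarith [mul_le_mul_of_nonneg_left (h1.trans hmin1) (by positivity : (0:ℝ) ≤ τ * δ)]
  · simp only [inP] at hP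
    push_neg at hP
    obtain ⟨l₀, b₀, b₀', hne, hbad⟩ := hP
    have hrows' : ∀ b b' a, b ≠ b' → τ ≤ (M0.transpose b a - M0.transpose b' a) ^ 2 :=
      fun b b' a hbb => by
        rw [Matrix.transpose_apply, Matrix.transpose_apply]
        exact hτcols a b b' hbb
    have hmb := main_bound_aux hK D C M0.transpose τ δ hτ hδ hD0 hC0 hT hS hTsum hSsum
      hrows' l₀ b₀ b₀' hne hbad
    rw [popG_transpose_aux, true_transpose_aux] at hmb
    refine le_trans hmb ?_
    apply neg_le_neg
    have hKpos : (0:ℝ) < K := by linarith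
    rw [div_le_div_iff₀ (by positivity) (by positivity)]
    have h1 : ε ^ 2 * K ≤ 1 := by nlinarith [mul_lt_mul_of_pos_left hεK hε]
    nlinarith [mul_le_mul_of_nonneg_left (h1.trans hmin1) (by positivity : (0:ℝ) ≤ τ * δ)]
end
end

section
/- Let f : ℝ → ℝ be twice differentiable with f''(μ) ≥ κ > 0 for all μ in an interval containing μ₁, μ₂, μ₃. Let w₁, w₂, w₃ ≥ 0 with w₁ + w₂ + w₃ = 1 and set z = w₁μ₁ + w₂μ₂ + w₃μ₃. Then w₁ f(μ₁) + w₂ f(μ₂) + w₃ f(μ₃) − f(z) ≥ (κ/4) w₁ w₂ (μ₁ − μ₂)². -/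
set_option autoImplicit false

/-- **Quantitative Jensen inequality for three points.** If `f` is twice differentiable with
`f'' ≥ κ > 0` on an interval (convex set) containing `μ₁, μ₂, μ₃`, and `w₁, w₂, w₃ ≥ 0` sum to
one, then with `z = w₁μ₁ + w₂μ₂ + w₃μ₃`,
`w₁ f(μ₁) + w₂ f(μ₂) + w₃ f(μ₃) − f(z) ≥ (κ/4) w₁ w₂ (μ₁ − μ₂)²`. -/
theorem jensen_gap_strongly_convex (f : ℝ → ℝ) (hf : ContDiff ℝ 2 f)
    (S : Set ℝ) (hS : Convex ℝ S) (κ : ℝ) (hκ : 0 < κ)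
    (hf'' : ∀ x ∈ S, κ ≤ deriv (deriv f) x)
    (μ₁ μ₂ μ₃ : ℝ) (hμ₁ : μ₁ ∈ S) (hμ₂ : μ₂ ∈ S) (hμ₃ : μ₃ ∈ S)
    (w₁ w₂ w₃ : ℝ) (hw₁ : 0 ≤ w₁) (hw₂ : 0 ≤ w₂) (hw₃ : 0 ≤ w₃)
    (hsum : w₁ + w₂ + w₃ = 1) (z : ℝ) (hz : z = w₁ * μ₁ + w₂ * μ₂ + w₃ * μ₃) :
    κ / 4 * w₁ * w₂ * (μ₁ - μ₂) ^ 2 ≤ w₁ * f μ₁ + w₂ * f μ₂ + w₃ * f μ₃ - f z := by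
  have hfd : Differentiable ℝ f := hf.differentiable (by norm_num)
  have hf1 : ContDiff ℝ 1 (deriv f) :=
    ((contDiff_succ_iff_deriv (n := 1)).mp (by exact_mod_cast hf)).2.2
  have hfd' : Differentiable ℝ (deriv f) := hf1.differentiable (by norm_num)
  set g : ℝ → ℝ := fun x => f x - κ/2 * x^2 with hg
  have hgd : Differentiable ℝ g := hfd.sub (by fun_prop)
  have hq : ∀ x : ℝ, deriv (fun y : ℝ => κ/2 * y^2) x = κ * x := by
    intro x
    rw [deriv_const_mul _ (by fun_prop)]
    simp; ring
  have hdg : deriv g = fun x => deriv f x - κ * x := by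
    funext x
    rw [hg, deriv_fun_sub (hfd x) (by fun_prop), hq]
  have hlin : ∀ x : ℝ, deriv (fun y : ℝ => κ * y) x = κ := by
    intro x
    rw [deriv_const_mul _ (by fun_prop)]
    simp
  have hdgd : Differentiable ℝ (deriv g) := hdg ▸ (hfd'.sub (by fun_prop))
  have hdg' : ∀ x ∈ S, 0 ≤ deriv (deriv g) x := by
    intro x hx
    rw [hdg, deriv_fun_sub (hfd' x) (by fun_prop), hlin]
    linarith [hf'' x hx]
  have hgc : ConvexOn ℝ S g := by
    apply convexOn_of_deriv2_nonneg hS hgd.continuous.continuousOn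
      hgd.differentiableOn hdgd.differentiableOn
    intro x hx
    show 0 ≤ deriv (deriv g) x
    exact hdg' x (interior_subset hx)
  have key : g z ≤ w₁ * g μ₁ + w₂ * g μ₂ + w₃ * g μ₃ := by
    have h := hgc.map_sum_le (t := (Finset.univ : Finset (Fin 3))) (w := ![w₁, w₂, w₃]) (p := ![μ₁, μ₂, μ₃])
      (by intro i _; fin_cases i <;> simpa) (by simp [Fin.sum_univ_three]; linarith)
      (by intro i _; fin_cases i <;> simpa)
    simp [Fin.sum_univ_three] at h
    rw [hz]
    convert h using 2
  have hsq : κ/2 * (w₁ * μ₁^2 + w₂ * μ₂^2 + w₃ * μ₃^2 - z^2) ≤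
      w₁ * f μ₁ + w₂ * f μ₂ + w₃ * f μ₃ - f z := by
    simp only [hg] at key
    nlinarith [key]
  have hvar : κ/4 * w₁ * w₂ * (μ₁ - μ₂)^2 ≤ κ/2 * (w₁ * μ₁^2 + w₂ * μ₂^2 + w₃ * μ₃^2 - z^2) := by
    have h13 : 0 ≤ w₁ * w₃ * (μ₁ - μ₃)^2 := by positivity
    have h23 : 0 ≤ w₂ * w₃ * (μ₂ - μ₃)^2 := by positivity
    have h12 : 0 ≤ w₁ * w₂ * (μ₁ - μ₂)^2 := by positivity
    have e : w₁ * μ₁^2 + w₂ * μ₂^2 + w₃ * μ₃^2 - z^2 =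
        w₁*w₂*(μ₁-μ₂)^2 + w₁*w₃*(μ₁-μ₃)^2 + w₂*w₃*(μ₂-μ₃)^2 := by
      rw [hz]; nlinarith [hsum]
    rw [e]; nlinarith
  linarith
end
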